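/- Let m be a positive even number and let K be a finite set of ordered pairs of elements of Fin m such that all first and second components of pairs of K are pairwise distinct (hence |K| ≤ m/2). Then conjugation by the phase-type fold-transversal gate U_P(Q(K)) maps the stabilizer group S of the quantum Reed–Muller code QRM(m) onto itself: for every g ∈ S, both U_P(Q(K)) * g * U_P(Q(K))⁻¹ ∈ S and U_P(Q(K))⁻¹ * g * U_P(Q(K)) ∈ S. -/

import Mathlib

/-- The vector `v_A` : its value at a label `x : Fin m → ZMod 2` is `∏_{a ∈ A} x a`. -/
def vA (m : ℕ) (A : Finset (Fin m)) : (Fin m → ZMod 2) → ZMod 2 :=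
  fun x => ∏ a ∈ A, x a

/-- Qubit labels. -/
abbrev Lab (m : ℕ) := Fin m → ZMod 2

/-- Basis states: functions from qubit labels to `ZMod 2`. -/
abbrev St (m : ℕ) := Lab m → ZMod 2

/-- The Pauli-X type operator `X(w)`: the matrix with `(y, x)` entry `1` if
`y = x + w` and `0` otherwise. -/
noncomputable def Xmat (m : ℕ) (w : St m) : Matrix (St m) (St m) ℂ :=
  Matrix.of fun y x => if y = x + w then 1 else 0

/-- `N(w, x)`: the number of qubits `q` with `w q = 1` and `x q = 1`. -/
def Nwt (m : ℕ) (w x : St m) : ℕ :=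
  (Finset.univ.filter (fun q => w q = 1 ∧ x q = 1)).card

/-- The Pauli-Z type operator `Z(w)`: the diagonal matrix with `(x, x)` entry
`(-1) ^ N(w, x)`. -/
noncomputable def Zmat (m : ℕ) (w : St m) : Matrix (St m) (St m) ℂ :=
  Matrix.diagonal fun x => (-1) ^ Nwt m w x

/-- The stabilizer group of the quantum Reed–Muller code `QRM(m)`: the subgroup
of invertible complex matrices generated by the matrices `X(v_A)` and `Z(v_A)`
for `A ⊆ Fin m` with `|A| ≤ m/2 - 1`. -/
noncomputable def stab (m : ℕ) : Subgroup (Matrix (St m) (St m) ℂ)ˣ :=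
  Subgroup.closure {u : (Matrix (St m) (St m) ℂ)ˣ |
    ∃ A : Finset (Fin m), A.card ≤ m / 2 - 1 ∧
      ((u : Matrix (St m) (St m) ℂ) = Xmat m (vA m A) ∨
       (u : Matrix (St m) (St m) ℂ) = Zmat m (vA m A))}

/-- The phase-type fold-transversal gate `U_P(π)` of an involutive permutation
`π` of the qubits: the diagonal matrix with `(x, x)` entry `i ^ c(x)`, where
`c(x) = ∑_q x(q)·x(π(q))` computed in `ℕ`. -/
noncomputable def UPg (m : ℕ) (f : Lab m → Lab m) : Matrix (St m) (St m) ℂ :=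
  Matrix.diagonal fun x => Complex.I ^ (∑ q, (x q).val * (x (f q)).val)

/-- All first and second components of the pairs in `K` are pairwise
distinct. -/
def distinctPairs (m : ℕ) (K : Finset (Fin m × Fin m)) : Prop :=
  (∀ p ∈ K, p.1 ≠ p.2) ∧
  (∀ p ∈ K, ∀ q ∈ K, p ≠ q →
    p.1 ≠ q.1 ∧ p.1 ≠ q.2 ∧ p.2 ≠ q.1 ∧ p.2 ≠ q.2)

/-- The permutation `Q(K)` of the labels: it sends `x` to the label `y` with
`y i = x i + x j` for each `(i,j) ∈ K` and `y l = x l` for all other `l`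
(stated via a sum over the pairs of `K` with first component `l`; when the
components of `K` are pairwise distinct there is at most one such pair). -/
def QKmap (m : ℕ) (K : Finset (Fin m × Fin m)) : Lab m → Lab m :=
  fun x l => x l + ∑ p ∈ K.filter (fun p => p.1 = l), x p.2


/-!
A generator `Z(v_A)` is diagonal and commutes with the diagonal gate `U = U_P(π)`, `π = Q(K)`.
For `X(w)` one compares phases: with `c(x) = ∑_q x(q) x(π q)`, the involution `π` makes
`c(x + w) ≡ c(x) + 2 N(w ∘ π, x) + c(w) (mod 4)`, so `U X(w) U⁻¹ = i^{c(w)} X(w) Z(w ∘ π)`.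
For `w = v_A` two facts remain. First, every coordinate of `Q(K) x` is linear in `x`, so
`v_A ∘ Q(K)` lies in the Reed–Muller code of order `|A| ≤ m/2 - 1` and `Z(v_A ∘ Q(K))` is a product
of stabilizer generators. Second, `c(v_A)` counts the labels `x` with `v_A(x) = v_A(Q(K) x) = 1`;
this condition only involves the at most `2|A| ≤ m - 2` coordinates of `A` and of their partners in
`K`, so the count is a multiple of `2^2` and the phase `i^{c(v_A)}` is trivial.
-/

open Finset

theorem card_pow_dvd_card_filter_of_dependsOn {ι R : Type*} [Fintype ι] [DecidableEq ι]
    [Fintype R] [Nonempty R] {P : (ι → R) → Prop} [DecidablePred P] {C : Finset ι}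
    (hP : DependsOn P C) :
    Fintype.card R ^ (Fintype.card ι - #C) ∣ #{x | P x} := by
  let e := Equiv.piEquivPiSubtypeProd (· ∈ C) (fun _ => R)
  let z₀ : {i // i ∉ C} → R := Classical.arbitrary _
  have hfree : ∀ x, P x ↔ P (e.symm ((e x).1, z₀)) := fun x =>
    (hP fun i hi => by simp [e, Equiv.piEquivPiSubtypeProd, mem_coe.mp hi]).to_iff
  have hsplit : {x // P x} ≃ {y // P (e.symm (y, z₀))} × ({i // i ∉ C} → R) :=
    (e.subtypeEquiv hfree).trans Equiv.prodSubtypeFstEquivSubtypeProd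
  rw [← Fintype.card_subtype, Fintype.card_congr hsplit, Fintype.card_prod, Fintype.card_fun,
    Fintype.card_subtype_compl, Fintype.card_coe]
  exact dvd_mul_left _ _

section FoldPhase

variable {ι : Type*} [Fintype ι] {π : ι → ι}

lemma dotProduct_comp_comm_of_involutive {R : Type*} [CommSemiring R]
    (hπ : Function.Involutive π) (X Y : ι → R) : X ⬝ᵥ (Y ∘ π) = Y ⬝ᵥ (X ∘ π) :=
  calc X ⬝ᵥ (Y ∘ π) = (X ∘ π) ⬝ᵥ Y := by
        simpa using dotProduct_comp_equiv_symm (u := X) (x := Y) hπ.toPerm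
    _ = Y ⬝ᵥ (X ∘ π) := dotProduct_comm _ _

lemma dotProduct_comp_add_self {R : Type*} [CommSemiring R] (hπ : Function.Involutive π)
    (X Y : ι → R) :
    (X + Y) ⬝ᵥ ((X + Y) ∘ π) = X ⬝ᵥ (X ∘ π) + 2 * (X ⬝ᵥ (Y ∘ π)) + Y ⬝ᵥ (Y ∘ π) := by
  rw [Pi.add_comp, add_dotProduct, dotProduct_add, dotProduct_add,
    dotProduct_comp_comm_of_involutive hπ Y X]
  ring

lemma natCast_val_add (a b : ZMod 2) :
    (((a + b).val : ℕ) : ZMod 4) = a.val + b.val + 2 * (a.val * b.val) := by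
  revert a b; decide

def foldPhase (π : ι → ι) (x : ι → ZMod 2) : ℕ :=
  ∑ q, (x q).val * (x (π q)).val

lemma foldPhase_add (hπ : Function.Involutive π) (x w : ι → ZMod 2) :
    (foldPhase π (x + w) : ZMod 4) =
      foldPhase π x + 2 * (∑ q, (x q).val * (w (π q)).val : ℕ) + foldPhase π w := by
  set X : ι → ZMod 4 := fun q => (x q).val
  set W : ι → ZMod 4 := fun q => (w q).val
  have hlift : (fun q => (((x + w) q).val : ZMod 4)) = X + W + (2 : ZMod 4) • (X * W) := by
    ext q; exact natCast_val_add (x q) (w q)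
  have h4 : (4 : ZMod 4) = 0 := rfl
  calc (foldPhase π (x + w) : ZMod 4)
      = (X + W + (2 : ZMod 4) • (X * W)) ⬝ᵥ ((X + W + (2 : ZMod 4) • (X * W)) ∘ π) := by
        rw [foldPhase, ← hlift]; push_cast; rfl
    _ = X ⬝ᵥ (X ∘ π) + 2 * (X ⬝ᵥ (W ∘ π)) + W ⬝ᵥ (W ∘ π) := by
        simp only [dotProduct_comp_add_self hπ, Pi.smul_comp, smul_dotProduct, dotProduct_smul,
          smul_eq_mul]
        linear_combination ((X + W) ⬝ᵥ ((X * W) ∘ π) + (X * W) ⬝ᵥ ((X * W) ∘ π)) * h4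
    _ = _ := by simp only [foldPhase]; push_cast; rfl

end FoldPhase

lemma I_pow_eq_of_natCast_eq {a b : ℕ} (h : (a : ZMod 4) = b) :
    Complex.I ^ a = Complex.I ^ b := by
  rw [Complex.I_pow_eq_pow_mod a, Complex.I_pow_eq_pow_mod b,
    (ZMod.natCast_eq_natCast_iff' a b 4).mp h]

lemma neg_one_pow_eq_of_natCast_eq {a b : ℕ} (h : (a : ZMod 2) = b) :
    (-1 : ℂ) ^ a = (-1) ^ b := by
  rw [neg_one_pow_eq_pow_mod_two, neg_one_pow_eq_pow_mod_two (n := b),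
    (ZMod.natCast_eq_natCast_iff' a b 2).mp h]

section Pauli

variable {m : ℕ}

lemma Nwt_eq_sum (w x : St m) : Nwt m w x = ∑ q, (w q).val * (x q).val := by
  rw [Nwt, card_filter]
  refine sum_congr rfl fun q _ => ?_
  generalize w q = a; generalize x q = b
  revert a b; decide

lemma natCast_Nwt (w x : St m) : (Nwt m w x : ZMod 2) = w ⬝ᵥ x := by
  simp [Nwt_eq_sum, dotProduct]

lemma Zmat_add (u v : St m) : Zmat m (u + v) = Zmat m u * Zmat m v := by
  rw [Zmat, Zmat, Zmat, Matrix.diagonal_mul_diagonal]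
  congr 1
  ext x
  rw [← pow_add]
  refine neg_one_pow_eq_of_natCast_eq ?_
  push_cast
  rw [natCast_Nwt, natCast_Nwt, natCast_Nwt, add_dotProduct]

lemma Zmat_zero : Zmat m 0 = 1 := by
  simp [Zmat, Nwt]

noncomputable def zHom (m : ℕ) : Multiplicative (St m) →* Matrix (St m) (St m) ℂ where
  toFun w := Zmat m w.toAdd
  map_one' := Zmat_zero
  map_mul' u v := Zmat_add u.toAdd v.toAdd

noncomputable def zUnit (m : ℕ) : Multiplicative (St m) →* (Matrix (St m) (St m) ℂ)ˣ :=
  (zHom m).toHomUnits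

@[simp]
lemma coe_zUnit (w : St m) : (zUnit m (.ofAdd w) : Matrix (St m) (St m) ℂ) = Zmat m w := rfl

lemma UPg_eq_diagonal (π : Lab m → Lab m) :
    UPg m π = Matrix.diagonal fun x => Complex.I ^ foldPhase π x := rfl

lemma isUnit_UPg (π : Lab m → Lab m) : IsUnit (UPg m π) :=
  Matrix.isUnit_diagonal.mpr <| Pi.isUnit_iff.mpr fun _ => (pow_ne_zero _ Complex.I_ne_zero).isUnit

lemma UPg_commute_Zmat (π : Lab m → Lab m) (w : St m) : Commute (UPg m π) (Zmat m w) :=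
  Matrix.commute_diagonal _ _

lemma UPg_mul_Xmat {π : Lab m → Lab m} (hπ : Function.Involutive π) {w : St m}
    (hw : 4 ∣ Nwt m w (w ∘ π)) :
    UPg m π * Xmat m w = Xmat m w * Zmat m (w ∘ π) * UPg m π := by
  ext y x
  simp only [UPg_eq_diagonal, Zmat, Xmat, Matrix.diagonal_mul, Matrix.mul_diagonal,
    Matrix.of_apply]
  split_ifs with h
  · subst h
    rw [mul_one, one_mul, ← Complex.I_sq, ← pow_mul, ← pow_add]
    refine I_pow_eq_of_natCast_eq ?_
    have hN : Nwt m (w ∘ π) x = ∑ q, (x q).val * (w (π q)).val := by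
      rw [Nwt_eq_sum]; exact sum_congr rfl fun _ _ => mul_comm _ _
    have hw' : (foldPhase π w : ZMod 4) = 0 := by
      rw [foldPhase, ← Nwt_eq_sum]
      exact (ZMod.natCast_eq_zero_iff _ 4).mpr hw
    rw [Nat.cast_add, Nat.cast_mul, foldPhase_add hπ, hw', hN]
    ring
  · simp

end Pauli

section ReedMuller

variable {m : ℕ}

def reedMuller (m r : ℕ) : Submodule (ZMod 2) (St m) :=
  Submodule.span (ZMod 2) {w | ∃ A : Finset (Fin m), #A ≤ r ∧ vA m A = w}

lemma vA_mem_reedMuller {r : ℕ} {A : Finset (Fin m)} (hA : #A ≤ r) :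
    vA m A ∈ reedMuller m r :=
  Submodule.subset_span ⟨A, hA, rfl⟩

lemma reedMuller_mono {r s : ℕ} (h : r ≤ s) : reedMuller m r ≤ reedMuller m s :=
  Submodule.span_mono fun _ ⟨A, hA, hw⟩ => ⟨A, hA.trans h, hw⟩

lemma vA_mul_vA (A B : Finset (Fin m)) : vA m A * vA m B = vA m (A ∪ B) := by
  have hidem : ∀ z : ZMod 2, z * z = z := by decide
  ext x
  simp only [Pi.mul_apply, vA]
  rw [← prod_union_inter, ← prod_sdiff inter_subset_union, mul_assoc, hidem]

lemma reedMuller_mul_le (r s : ℕ) : reedMuller m r * reedMuller m s ≤ reedMuller m (r + s) := by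
  rw [reedMuller, reedMuller, Submodule.span_mul_span]
  refine Submodule.span_le.mpr ?_
  rintro _ ⟨_, ⟨A, hA, rfl⟩, _, ⟨B, hB, rfl⟩, rfl⟩
  beta_reduce
  rw [vA_mul_vA]
  exact vA_mem_reedMuller ((card_union_le A B).trans (add_le_add hA hB))

lemma coord_mem_reedMuller (i : Fin m) : (fun x : Lab m => x i) ∈ reedMuller m 1 := by
  have hcoord : vA m {i} = fun x => x i := funext fun x => prod_singleton _ _
  rw [← hcoord]
  exact vA_mem_reedMuller (card_singleton i).le

lemma prod_mem_reedMuller {α : Type*} {s : Finset α} {f : α → St m}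
    (hf : ∀ i ∈ s, f i ∈ reedMuller m 1) : ∏ i ∈ s, f i ∈ reedMuller m #s := by
  classical
  induction s using Finset.induction_on with
  | empty =>
    have hone : vA m ∅ = 1 := funext fun _ => prod_empty
    simpa [hone] using vA_mem_reedMuller (m := m) (A := ∅) le_rfl
  | insert a s ha ih =>
    rw [prod_insert ha, card_insert_of_notMem ha, add_comm]
    exact reedMuller_mul_le 1 #s (Submodule.mul_mem_mul (hf a (mem_insert_self a s))
      (ih fun i hi => hf i (mem_insert_of_mem hi)))

lemma vA_comp_mem_reedMuller {L : Lab m → Lab m} (hL : ∀ i, (fun x => L x i) ∈ reedMuller m 1)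
    (A : Finset (Fin m)) : vA m A ∘ L ∈ reedMuller m #A := by
  have hprod : vA m A ∘ L = ∏ a ∈ A, fun x => L x a := by
    ext x; simp [vA]
  rw [hprod]
  exact prod_mem_reedMuller fun a _ => hL a

lemma zUnit_mem_stab {w : St m} (hw : w ∈ reedMuller m (m / 2 - 1)) :
    zUnit m (.ofAdd w) ∈ stab m := by
  induction hw using Submodule.span_induction with
  | mem w hw =>
    obtain ⟨A, hA, rfl⟩ := hw
    exact Subgroup.subset_closure ⟨A, hA, Or.inr rfl⟩
  | zero => simp
  | add u v _ _ hu hv => simpa using mul_mem hu hv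
  | smul c w _ hw =>
    obtain rfl | rfl : c = 0 ∨ c = 1 := by revert c; decide
    · simp
    · simpa using hw

end ReedMuller

section FoldMap

variable {m : ℕ} {K : Finset (Fin m × Fin m)}

lemma QKmap_apply_snd (hK : distinctPairs m K) {p : Fin m × Fin m} (hp : p ∈ K) (x : Lab m) :
    QKmap m K x p.2 = x p.2 := by
  rw [QKmap, add_eq_left, sum_eq_zero]
  intro q hq
  rw [mem_filter] at hq
  by_cases hqp : q = p
  · exact absurd (hqp ▸ hq.2) (hK.1 p hp)
  · exact absurd hq.2.symm (hK.2 p hp q hq.1 (Ne.symm hqp)).2.2.1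

lemma QKmap_involutive (hK : distinctPairs m K) : Function.Involutive (QKmap m K) := by
  intro x
  ext l
  have hsnd : ∀ p ∈ K.filter (fun p => p.1 = l), QKmap m K x p.2 = x p.2 :=
    fun p hp => QKmap_apply_snd hK (mem_filter.mp hp).1 x
  rw [QKmap, sum_congr rfl hsnd, QKmap, add_assoc, CharTwo.add_self_eq_zero, add_zero]

lemma QKmap_coord_mem_reedMuller (l : Fin m) :
    (fun x => QKmap m K x l) ∈ reedMuller m 1 := by
  have hsplit : (fun x => QKmap m K x l) =
      (fun x : Lab m => x l) + ∑ p ∈ K.filter (fun p => p.1 = l), fun x : Lab m => x p.2 := by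
    ext x; simp [QKmap]
  rw [hsplit]
  exact add_mem (coord_mem_reedMuller l) (sum_mem fun p _ => coord_mem_reedMuller p.2)

lemma dependsOn_vA (A : Finset (Fin m)) : DependsOn (vA m A) ↑A :=
  fun _ _ h => prod_congr rfl h

lemma dependsOn_vA_comp_QKmap (A : Finset (Fin m)) :
    DependsOn (vA m A ∘ QKmap m K) ↑(A ∪ (K.filter (·.1 ∈ A)).image Prod.snd) := by
  intro x y hxy
  refine prod_congr rfl fun a ha => ?_
  simp only [QKmap]
  congr 1
  · exact hxy a (by simp [ha])
  · refine sum_congr rfl fun p hp => hxy p.2 ?_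
    rw [mem_filter] at hp
    simp only [coe_union, coe_image, coe_filter, Set.mem_union, Set.mem_image, Set.mem_ofPred_eq]
    exact Or.inr ⟨p, ⟨hp.1, hp.2 ▸ ha⟩, rfl⟩

lemma card_filter_fst_mem_le (hK : distinctPairs m K) (A : Finset (Fin m)) :
    #(K.filter (·.1 ∈ A)) ≤ #A :=
  card_le_card_of_injOn Prod.fst (fun p hp => (mem_filter.mp hp).2) fun p hp q hq hpq => by
    by_contra hne
    exact (hK.2 p (mem_filter.mp hp).1 q (mem_filter.mp hq).1 hne).1 hpq

lemma four_dvd_Nwt_vA_comp_QKmap (hK : distinctPairs m K) {A : Finset (Fin m)}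
    (hA : 2 * #A + 2 ≤ m) : 4 ∣ Nwt m (vA m A) (vA m A ∘ QKmap m K) := by
  set C := A ∪ (K.filter (·.1 ∈ A)).image Prod.snd
  have hC : #C ≤ 2 * #A := calc
    #C ≤ #A + #(K.filter (·.1 ∈ A)) :=
        (card_union_le _ _).trans (Nat.add_le_add_left card_image_le _)
    _ ≤ 2 * #A := by linarith [card_filter_fst_mem_le hK A]
  have hdep : DependsOn (fun x => vA m A x = 1 ∧ (vA m A ∘ QKmap m K) x = 1) ↑C := fun x y hxy => by
    dsimp only
    rw [dependsOn_vA_comp_QKmap A hxy,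
      (dependsOn_vA A).mono (coe_subset.mpr subset_union_left) hxy]
  have := card_pow_dvd_card_filter_of_dependsOn hdep
  rw [ZMod.card, Fintype.card_fin] at this
  exact (pow_dvd_pow 2 (by omega) : 2 ^ 2 ∣ 2 ^ (m - #C)).trans this

end FoldMap

theorem Subgroup.conj_mem_closure_of_mul_eq {G : Type*} [Group G] {S : Set G} {u : G}
    (h : ∀ s ∈ S, ∃ z ∈ closure S, Commute u z ∧ u * s = s * z * u) {g : G}
    (hg : g ∈ closure S) : u * g * u⁻¹ ∈ closure S ∧ u⁻¹ * g * u ∈ closure S := by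
  have conj_mem (v : G) (hv : ∀ s ∈ S, v * s * v⁻¹ ∈ closure S) : v * g * v⁻¹ ∈ closure S :=
    (closure_le ((closure S).comap (MulAut.conj v).toMonoidHom)).mpr hv hg
  constructor
  · refine conj_mem u fun s hs => ?_
    obtain ⟨z, hz, -, hus⟩ := h s hs
    rw [hus, mul_inv_cancel_right]
    exact mul_mem (subset_closure hs) hz
  · have := conj_mem u⁻¹ fun s hs => by
      obtain ⟨z, hz, hcomm, hus⟩ := h s hs
      have hconj : u⁻¹ * s * u = s * z⁻¹ := by
        rw [eq_mul_inv_iff_mul_eq, mul_assoc, hcomm.eq, ← mul_assoc, mul_assoc u⁻¹,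
          mul_assoc u⁻¹, ← hus, inv_mul_cancel_left]
      rw [inv_inv, hconj]
      exact mul_mem (subset_closure hs) (inv_mem hz)
    rwa [inv_inv] at this

lemma conj_mem_stab {m : ℕ} (hm : Even m) (h0 : 0 < m) {K : Finset (Fin m × Fin m)}
    (hK : distinctPairs m K) {U : (Matrix (St m) (St m) ℂ)ˣ}
    (hU : (U : Matrix (St m) (St m) ℂ) = UPg m (QKmap m K)) {g : (Matrix (St m) (St m) ℂ)ˣ}
    (hg : g ∈ stab m) : U * g * U⁻¹ ∈ stab m ∧ U⁻¹ * g * U ∈ stab m := by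
  refine Subgroup.conj_mem_closure_of_mul_eq ?_ hg
  rintro s ⟨A, hA, hX | hZ⟩
  · have hA' : 2 * #A + 2 ≤ m := by obtain ⟨k, rfl⟩ := hm; omega
    refine ⟨zUnit m (.ofAdd (vA m A ∘ QKmap m K)), ?_, ?_, ?_⟩
    · exact zUnit_mem_stab (reedMuller_mono hA
        (vA_comp_mem_reedMuller QKmap_coord_mem_reedMuller A))
    · exact Units.ext (by simpa [hU] using (UPg_commute_Zmat _ _).eq)
    · refine Units.ext ?_
      simp only [Units.val_mul, hU, hX, coe_zUnit]
      exact UPg_mul_Xmat (QKmap_involutive hK) (four_dvd_Nwt_vA_comp_QKmap hK hA')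
  · exact ⟨1, one_mem _, Commute.one_right U,
      Units.ext (by simpa [hU, hZ] using (UPg_commute_Zmat _ _).eq)⟩

/-- Conjugation by `U_P(Q(K))` maps the stabilizer group of `QRM(m)` onto
itself. -/
theorem stmt10 (m : ℕ) (hm : Even m) (h0 : 0 < m) (K : Finset (Fin m × Fin m))
    (hK : distinctPairs m K) :
    ∀ g ∈ stab m,
      (∃ h ∈ stab m, (h : Matrix (St m) (St m) ℂ) =
        UPg m (QKmap m K) * (g : Matrix (St m) (St m) ℂ) * (UPg m (QKmap m K))⁻¹) ∧
      (∃ h ∈ stab m, (h : Matrix (St m) (St m) ℂ) =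
        (UPg m (QKmap m K))⁻¹ * (g : Matrix (St m) (St m) ℂ) * UPg m (QKmap m K)) := by
  intro g hg
  set U := (isUnit_UPg (QKmap m K)).unit
  have hU : (U : Matrix (St m) (St m) ℂ) = UPg m (QKmap m K) := IsUnit.unit_spec _
  obtain ⟨hconj, hconj'⟩ := conj_mem_stab hm h0 hK hU hg
  exact ⟨⟨_, hconj, by simp [hU, Matrix.coe_units_inv]⟩,
    ⟨_, hconj', by simp [hU, Matrix.coe_units_inv]⟩⟩
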